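/- For every integer k ≥ 1, the cycle graphs C_{3k+1} and C_{3k+2} are minimal S-imperfect. -/

import Mathlib

open SimpleGraph

/-- A set `T` of vertices is *S-independent* in `G` if any two distinct vertices of `T`
are at distance at least 3 in `G` (equivalently, no two of them lie in a common star
subgraph of `G`): they are non-adjacent and have no common neighbor. -/
def SimpleGraph.SIndepSet {V : Type*} (G : SimpleGraph V) (T : Set V) : Prop :=
  ∀ u ∈ T, ∀ w ∈ T, u ≠ w → ¬ G.Adj u w ∧ ∀ x : V, ¬ (G.Adj u x ∧ G.Adj x w)

/-- `D` is a dominating set of `G`: every vertex is in `D` or adjacent to a vertex of `D`. -/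
def SimpleGraph.DominatingSet {V : Type*} (G : SimpleGraph V) (D : Finset V) : Prop :=
  ∀ v : V, v ∈ D ∨ ∃ d ∈ D, G.Adj d v

/-- `α_S(G)`: the maximum size of an S-independent set of vertices of `G`. -/
noncomputable def alphaS {V : Type*} (G : SimpleGraph V) : ℕ :=
  sSup {n | ∃ T : Finset V, G.SIndepSet ↑T ∧ T.card = n}

/-- `θ_S(G)`: the domination number of `G`, i.e. the minimum size of a dominating set
(equivalently, the minimum number of stars needed to cover all vertices of `G`). -/
noncomputable def thetaS {V : Type*} (G : SimpleGraph V) : ℕ :=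
  sInf {n | ∃ D : Finset V, G.DominatingSet D ∧ D.card = n}

/-- `G` is *S-perfect* if `α_S(H) = θ_S(H)` for every induced subgraph `H` of `G`
(induced on any subset of the vertices). -/
def SPerfect {V : Type*} (G : SimpleGraph V) : Prop :=
  ∀ s : Set V, alphaS (G.induce s) = thetaS (G.induce s)

/-- `G` is *minimal S-imperfect* if `α_S(G) ≠ θ_S(G)` and `G − v` is S-perfect
for every vertex `v` of `G`. -/
def MinSImperfect {V : Type*} (G : SimpleGraph V) : Prop :=
  alphaS G ≠ thetaS G ∧ ∀ v : V, SPerfect (G.induce {v}ᶜ)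

/-! ### Auxiliary lemmas -/

section Basic

variable {V : Type*}

/-- Any S-independent set is at most as large as any dominating set. -/
lemma sindep_card_le_dom_card {G : SimpleGraph V} {T D : Finset V}
    (hT : G.SIndepSet ↑T) (hD : G.DominatingSet D) : T.card ≤ D.card := by
  classical
  have h : ∀ u : V, ∃ d, u ∈ T → d ∈ D ∧ (d = u ∨ G.Adj d u) := by
    intro u
    rcases hD u with h | ⟨d, hd, ha⟩
    · exact ⟨u, fun _ => ⟨h, Or.inl rfl⟩⟩
    · exact ⟨d, fun _ => ⟨hd, Or.inr ha⟩⟩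
  choose f hf using h
  apply Finset.card_le_card_of_injOn f (fun u hu => (hf u hu).1)
  intro u hu w hw huw
  by_contra hne
  obtain ⟨hadj, hcn⟩ := hT u (by simpa using hu) w (by simpa using hw) hne
  rcases (hf u hu).2 with h1 | h1 <;> rcases (hf w hw).2 with h2 | h2
  · exact hne (h1.symm.trans (huw.trans h2))
  · exact hadj (by rwa [← huw, h1] at h2)
  · exact hadj (by rw [huw, h2] at h1; exact h1.symm)
  · exact hcn (f u) ⟨h1.symm, huw ▸ h2⟩

lemma zero_mem_alphaS_set (G : SimpleGraph V) :
    0 ∈ {n | ∃ T : Finset V, G.SIndepSet ↑T ∧ T.card = n} :=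
  ⟨∅, by simp [SimpleGraph.SIndepSet], rfl⟩

lemma univ_mem_thetaS_set [Fintype V] (G : SimpleGraph V) :
    (Finset.univ : Finset V).card ∈ {n | ∃ D : Finset V, G.DominatingSet D ∧ D.card = n} :=
  ⟨Finset.univ, fun v => Or.inl (Finset.mem_univ v), rfl⟩

lemma alphaS_le_thetaS [Fintype V] (G : SimpleGraph V) : alphaS G ≤ thetaS G := by
  classical
  have hne : {n | ∃ D : Finset V, G.DominatingSet D ∧ D.card = n}.Nonempty :=
    ⟨_, univ_mem_thetaS_set G⟩
  obtain ⟨D, hD, hDcard⟩ := Nat.sInf_mem hne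
  apply csSup_le ⟨0, zero_mem_alphaS_set G⟩
  rintro n ⟨T, hT, rfl⟩
  calc T.card ≤ D.card := sindep_card_le_dom_card hT hD
  _ = _ := hDcard

/-- Greedy construction on "line-like" graphs: for every finite vertex subset `t`
there are an S-independent set and a dominating set (relative to `t`) with the
dominating set no larger. -/
lemma line_greedy [DecidableEq V] (G : SimpleGraph V) (f : V → ℕ)
    (hinj : Function.Injective f)
    (hadj : ∀ a b : V, G.Adj a b ↔ f a = f b + 1 ∨ f b = f a + 1) :
    ∀ t : Finset V, ∃ T D : Finset V, T ⊆ t ∧ D ⊆ t ∧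
      (∀ u ∈ T, ∀ w ∈ T, u ≠ w → ¬ G.Adj u w ∧ ∀ x ∈ t, ¬ (G.Adj u x ∧ G.Adj x w)) ∧
      (∀ x ∈ t, x ∈ D ∨ ∃ d ∈ D, G.Adj d x) ∧ D.card ≤ T.card := by
  classical
  intro t
  induction t using Finset.strongInduction with
  | _ t ih =>
  rcases t.eq_empty_or_nonempty with rfl | hne
  · exact ⟨∅, ∅, Finset.Subset.refl _, Finset.Subset.refl _, by simp, by simp, le_refl _⟩
  obtain ⟨u, hut, hmin⟩ := t.exists_min_image f hne
  by_cases hB : ∃ e ∈ t, f e = f u + 1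
  · -- u has a right-neighbour d in t
    obtain ⟨d, hdt, hfd⟩ := hB
    have hadj_du : G.Adj d u := (hadj d u).mpr (Or.inl hfd)
    set t' := t.filter (fun x => ¬ G.Adj d x ∧ x ≠ d) with ht'
    have hd_ne : d ∉ t' := by simp [ht', Finset.mem_filter]
    have hsub : t' ⊂ t :=
      (Finset.ssubset_iff_of_subset (Finset.filter_subset _ _)).mpr ⟨d, hdt, hd_ne⟩
    obtain ⟨T', D', hT't, hD't, hTind, hDdom, hcard⟩ := ih t' hsub
    have hmem_t' : ∀ x ∈ t', x ∈ t := fun x hx => (Finset.mem_filter.mp hx).1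
    have hfar : ∀ x ∈ t', f u + 3 ≤ f x := by
      intro x hx
      obtain ⟨hxt, hnadj, hnd⟩ :=
        (by simpa [ht', Finset.mem_filter, and_assoc] using hx :
          x ∈ t ∧ ¬ G.Adj d x ∧ x ≠ d)
      have h1 : f u ≤ f x := hmin x hxt
      have h2 : f x ≠ f u := fun h => hnadj (by rw [hinj h]; exact hadj_du)
      have h3 : f x ≠ f u + 1 := fun h => hnd (hinj (h.trans hfd.symm))
      have h4 : f x ≠ f u + 2 := fun h =>
        hnadj ((hadj d x).mpr (Or.inr (by omega)))
      omega
    have hu_not_t' : u ∉ t' := fun h => (Finset.mem_filter.mp h).2.1 hadj_du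
    have hcov : ∀ x ∈ t, x ∉ t' → G.Adj d x ∨ x = d := by
      intro x hxt hx
      by_contra hc
      push_neg at hc
      exact hx (Finset.mem_filter.mpr ⟨hxt, hc.1, hc.2⟩)
    have hband : ∀ x ∈ t, x ∉ t' → f x ≤ f u + 2 := by
      intro x hxt hx
      rcases hcov x hxt hx with h | rfl
      · rcases (hadj d x).mp h with h' | h' <;> omega
      · omega
    refine ⟨insert u T', insert d D', ?_, ?_, ?_, ?_, ?_⟩
    · exact Finset.insert_subset hut (hT't.trans (Finset.filter_subset _ _))
    · exact Finset.insert_subset hdt (hD't.trans (Finset.filter_subset _ _))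
    · intro a ha b hb hab
      rcases Finset.mem_insert.mp ha with rfl | haT <;>
        rcases Finset.mem_insert.mp hb with rfl | hbT
      · exact absurd rfl hab
      · have hbt' := hT't hbT
        have hfb := hfar b hbt'
        constructor
        · intro h
          have := hmin b (hmem_t' b hbt')
          rcases (hadj a b).mp h with h' | h' <;> omega
        · rintro x hxt ⟨h1, h2⟩
          have hxm := hmin x hxt
          have hx1 : f x = f a + 1 := by
            rcases (hadj a x).mp h1 with h' | h'
            · omega
            · exact h'
          rcases (hadj x b).mp h2 with h' | h' <;> omega
      · have hat' := hT't haT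
        have hfa := hfar a hat'
        constructor
        · intro h
          have := hmin a (hmem_t' a hat')
          rcases (hadj a b).mp h with h' | h' <;> omega
        · rintro x hxt ⟨h1, h2⟩
          have hxm := hmin x hxt
          have hx1 : f x = f b + 1 := by
            rcases (hadj x b).mp h2 with h' | h'
            · exact h'
            · omega
          rcases (hadj a x).mp h1 with h' | h' <;> omega
      · obtain ⟨hnadj, hcn⟩ := hTind a haT b hbT hab
        refine ⟨hnadj, ?_⟩
        rintro x hxt ⟨h1, h2⟩
        by_cases hx : x ∈ t'
        · exact hcn x hx ⟨h1, h2⟩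
        · have hxb := hband x hxt hx
          have hxm := hmin x hxt
          have hfa := hfar a (hT't haT)
          have hfb := hfar b (hT't hbT)
          have e1 := (hadj a x).mp h1
          have e2 := (hadj x b).mp h2
          have : f a = f b := by omega
          exact hab (hinj this)
    · intro x hxt
      by_cases hx : x ∈ t'
      · rcases hDdom x hx with h | ⟨e, he, hae⟩
        · exact Or.inl (Finset.mem_insert_of_mem h)
        · exact Or.inr ⟨e, Finset.mem_insert_of_mem he, hae⟩
      · rcases hcov x hxt hx with h | rfl
        · exact Or.inr ⟨d, Finset.mem_insert_self _ _, h⟩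
        · exact Or.inl (Finset.mem_insert_self _ _)
    · have hu' : u ∉ T' := fun h => hu_not_t' (hT't h)
      have h1 := Finset.card_insert_le d D'
      have h2 := Finset.card_insert_of_notMem hu'
      omega
  · -- u is isolated in t
    push_neg at hB
    have hiso : ∀ x ∈ t, ¬ G.Adj u x := by
      intro x hxt h
      have := hmin x hxt
      rcases (hadj u x).mp h with h' | h'
      · omega
      · exact hB x hxt h'
    set t' := t.filter (fun x => ¬ G.Adj u x ∧ x ≠ u) with ht'
    have hu_not : u ∉ t' := by simp [ht', Finset.mem_filter]
    have hsub : t' ⊂ t :=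
      (Finset.ssubset_iff_of_subset (Finset.filter_subset _ _)).mpr ⟨u, hut, hu_not⟩
    obtain ⟨T', D', hT't, hD't, hTind, hDdom, hcard⟩ := ih t' hsub
    have hmem_t' : ∀ x ∈ t', x ∈ t := fun x hx => (Finset.mem_filter.mp hx).1
    have ht'_eq : ∀ x ∈ t, x ∉ t' → x = u := by
      intro x hxt hx
      by_contra hne'
      exact hx (Finset.mem_filter.mpr ⟨hxt, hiso x hxt, hne'⟩)
    refine ⟨insert u T', insert u D', ?_, ?_, ?_, ?_, ?_⟩
    · exact Finset.insert_subset hut (hT't.trans (Finset.filter_subset _ _))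
    · exact Finset.insert_subset hut (hD't.trans (Finset.filter_subset _ _))
    · intro a ha b hb hab
      rcases Finset.mem_insert.mp ha with rfl | haT <;>
        rcases Finset.mem_insert.mp hb with rfl | hbT
      · exact absurd rfl hab
      · refine ⟨hiso b (hmem_t' b (hT't hbT)), ?_⟩
        rintro x hxt ⟨h1, _⟩
        exact hiso x hxt h1
      · refine ⟨fun h => hiso a (hmem_t' a (hT't haT)) h.symm, ?_⟩
        rintro x hxt ⟨_, h2⟩
        exact hiso x hxt h2.symm
      · obtain ⟨hnadj, hcn⟩ := hTind a haT b hbT hab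
        refine ⟨hnadj, ?_⟩
        rintro x hxt ⟨h1, h2⟩
        by_cases hx : x ∈ t'
        · exact hcn x hx ⟨h1, h2⟩
        · rw [ht'_eq x hxt hx] at h1
          exact hiso a (hmem_t' a (hT't haT)) h1.symm
    · intro x hxt
      by_cases hx : x ∈ t'
      · rcases hDdom x hx with h | ⟨e, he, hae⟩
        · exact Or.inl (Finset.mem_insert_of_mem h)
        · exact Or.inr ⟨e, Finset.mem_insert_of_mem he, hae⟩
      · exact Or.inl (ht'_eq x hxt hx ▸ Finset.mem_insert_self _ _)
    · have hu' : u ∉ T' := fun h => hu_not (hT't h)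
      have h1 := Finset.card_insert_le u D'
      have h2 := Finset.card_insert_of_notMem hu'
      omega

/-- On a finite "line-like" graph, `θ_S ≤ α_S`. -/
lemma thetaS_le_alphaS_line [Fintype V] (H : SimpleGraph V) (f : V → ℕ)
    (hinj : Function.Injective f)
    (hadj : ∀ a b : V, H.Adj a b ↔ f a = f b + 1 ∨ f b = f a + 1) :
    thetaS H ≤ alphaS H := by
  classical
  obtain ⟨T, D, _, _, hT, hD, hcard⟩ := line_greedy H f hinj hadj Finset.univ
  have hDom : H.DominatingSet D := fun v => hD v (Finset.mem_univ v)
  have hInd : H.SIndepSet ↑T := by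
    intro u hu w hw huw
    obtain ⟨h1, h2⟩ := hT u (by simpa using hu) w (by simpa using hw) huw
    exact ⟨h1, fun x => h2 x (Finset.mem_univ x)⟩
  calc thetaS H ≤ D.card := Nat.sInf_le ⟨D, hDom, rfl⟩
  _ ≤ T.card := hcard
  _ ≤ alphaS H := le_csSup
      ⟨Fintype.card V, by rintro n ⟨T', _, rfl⟩; exact Finset.card_le_univ T'⟩
      ⟨T, hInd, rfl⟩

end Basic

/-! ### Arithmetic on `Fin` -/

lemma fin_eq_add_one_iff {n : ℕ} {a b : Fin (n + 2)} (ha : a ≠ 0) :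
    a = b + 1 ↔ a.val = b.val + 1 := by
  have hb := b.isLt
  have haLt := a.isLt
  have ha' : a.val ≠ 0 := fun h => ha (Fin.ext (by simp [h]))
  rw [Fin.ext_iff, Fin.val_add, Fin.val_one]
  rcases Nat.lt_or_ge (b.val + 1) (n + 2) with h | h
  · rw [Nat.mod_eq_of_lt h]
  · have hbv : b.val + 1 = n + 2 := by omega
    rw [hbv, Nat.mod_self]
    exact iff_of_false ha' (by omega)

lemma fin_sub_eq_one_iff {n : ℕ} {a b : Fin (n + 2)} (ha : a ≠ 0) :
    a - b = 1 ↔ a.val = b.val + 1 := by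
  rw [sub_eq_iff_eq_add, show (1 : Fin (n + 2)) + b = b + 1 from add_comm 1 b,
    fin_eq_add_one_iff ha]

open SimpleGraph in
lemma cycle_adj_iff_vals {n : ℕ} {v x y : Fin (n + 2)} (hx : x ≠ v) (hy : y ≠ v) :
    (cycleGraph (n + 2)).Adj x y ↔
      ((x - v).val = (y - v).val + 1 ∨ (y - v).val = (x - v).val + 1) := by
  rw [cycleGraph_adj, ← sub_sub_sub_cancel_right x y v, ← sub_sub_sub_cancel_right y x v,
    fin_sub_eq_one_iff (sub_ne_zero_of_ne hx), fin_sub_eq_one_iff (sub_ne_zero_of_ne hy)]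

/-! ### Bounds for the cycle -/

open SimpleGraph Finset in
lemma cycle_theta_lb (m : ℕ) {D : Finset (Fin (m + 2))}
    (hD : (cycleGraph (m + 2)).DominatingSet D) : m + 2 ≤ 3 * D.card := by
  classical
  have hcov : (Finset.univ : Finset (Fin (m + 2))) ⊆
      D.biUnion (fun d => {d - 1, d, d + 1}) := by
    intro x _
    rcases hD x with h | ⟨d, hd, hadj⟩
    · exact Finset.mem_biUnion.mpr ⟨x, h, by simp⟩
    · refine Finset.mem_biUnion.mpr ⟨d, hd, ?_⟩
      rcases cycleGraph_adj.mp hadj with h | h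
      · have hx : x = d - 1 := by
          rw [sub_eq_iff_eq_add] at h
          rw [h]; abel
        simp [hx]
      · have hx : x = d + 1 := by
          rw [sub_eq_iff_eq_add] at h
          rw [h]; abel
        simp [hx]
  have hbound : ∀ d : Fin (m + 2), ({d - 1, d, d + 1} : Finset (Fin (m + 2))).card ≤ 3 := by
    intro d
    have h1 := Finset.card_insert_le (d - 1) ({d, d + 1} : Finset (Fin (m + 2)))
    have h2 := Finset.card_insert_le d ({d + 1} : Finset (Fin (m + 2)))
    have h3 : ({d + 1} : Finset (Fin (m + 2))).card = 1 := Finset.card_singleton _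
    omega
  calc m + 2 = (Finset.univ : Finset (Fin (m + 2))).card := by simp
  _ ≤ (D.biUnion (fun d => {d - 1, d, d + 1})).card := Finset.card_le_card hcov
  _ ≤ ∑ d ∈ D, ({d - 1, d, d + 1} : Finset (Fin (m + 2))).card := Finset.card_biUnion_le
  _ ≤ ∑ _d ∈ D, 3 := Finset.sum_le_sum (fun d _ => hbound d)
  _ = 3 * D.card := by rw [Finset.sum_const, smul_eq_mul, mul_comm]

open SimpleGraph Finset in
lemma cycle_alpha_ub (m : ℕ) (hm : 2 ≤ m) {T : Finset (Fin (m + 2))}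
    (hT : (cycleGraph (m + 2)).SIndepSet ↑T) : 3 * T.card ≤ m + 2 := by
  classical
  set g : Fin (m + 2) → Finset (Fin (m + 2)) := fun t => {t, t + 1, t + 1 + 1} with hg
  have hone : ∀ s : Fin (m + 2), s ≠ s + 1 := by
    intro s h
    have : (1 : Fin (m + 2)) = 0 := by
      have := (left_eq_add).mp h
      exact this
    exact one_ne_zero this
  have h2v : ((1 : Fin (m + 2)) + 1).val = 2 := by
    rw [Fin.val_add, Fin.val_one]
    exact Nat.mod_eq_of_lt (by omega)
  have htwo : ∀ s : Fin (m + 2), s ≠ s + 1 + 1 := by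
    intro s h
    rw [add_assoc] at h
    have h0 : (1 : Fin (m + 2)) + 1 = 0 := (left_eq_add).mp h
    rw [h0] at h2v
    simp at h2v
  have hadj1 : ∀ a : Fin (m + 2), (cycleGraph (m + 2)).Adj a (a + 1) := by
    intro a
    exact cycleGraph_adj.mpr (Or.inr (add_sub_cancel_left a 1))
  have hcard3 : ∀ t, (g t).card = 3 := by
    intro t
    rw [hg]
    rw [Finset.card_insert_of_notMem (by
      simp only [Finset.mem_insert, Finset.mem_singleton]
      push_neg
      exact ⟨hone t, htwo t⟩)]
    rw [Finset.card_insert_of_notMem (by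
      simp only [Finset.mem_singleton]
      exact hone (t + 1))]
    simp
  have hkill1 : ∀ a b : Fin (m + 2), a ∈ T → b ∈ T → a ≠ b → b ≠ a + 1 := by
    intro a b ha hb hne h
    exact (hT a (by simpa using ha) b (by simpa using hb) hne).1 (h ▸ hadj1 a)
  have hkill2 : ∀ a b : Fin (m + 2), a ∈ T → b ∈ T → a ≠ b → b ≠ a + 1 + 1 := by
    intro a b ha hb hne h
    exact (hT a (by simpa using ha) b (by simpa using hb) hne).2 (a + 1)
      ⟨hadj1 a, h ▸ hadj1 (a + 1)⟩
  have hdisj : ∀ a ∈ T, ∀ b ∈ T, a ≠ b → Disjoint (g a) (g b) := by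
    intro a ha b hb hne
    rw [Finset.disjoint_left]
    intro x hxa hxb
    simp only [hg, Finset.mem_insert, Finset.mem_singleton] at hxa hxb
    rcases hxa with h1 | h1 | h1 <;> rcases hxb with h2 | h2 | h2
    · exact hne (h1.symm.trans h2)
    · exact hkill1 b a hb ha hne.symm (h1.symm.trans h2)
    · exact hkill2 b a hb ha hne.symm (h1.symm.trans h2)
    · exact hkill1 a b ha hb hne (h2.symm.trans h1)
    · exact hne (add_right_cancel (h1.symm.trans h2))
    · exact hkill1 b a hb ha hne.symm (add_right_cancel (h1.symm.trans h2))
    · exact hkill2 a b ha hb hne (h2.symm.trans h1)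
    · exact hkill1 a b ha hb hne (add_right_cancel (h1.symm.trans h2)).symm
    · exact hne (add_right_cancel (add_right_cancel (h1.symm.trans h2)))
  calc 3 * T.card = ∑ t ∈ T, (g t).card := by
        rw [Finset.sum_congr rfl (fun t _ => hcard3 t), Finset.sum_const, smul_eq_mul,
          mul_comm]
  _ = (T.biUnion g).card := (Finset.card_biUnion hdisj).symm
  _ ≤ (Finset.univ : Finset (Fin (m + 2))).card := Finset.card_le_card (Finset.subset_univ _)
  _ = m + 2 := by simp

/-! ### Main lemma -/

open SimpleGraph in
lemma cycle_master {m k : ℕ} (hm : 2 ≤ m) (hlow : 3 * k + 1 ≤ m + 2)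
    (hhigh : m + 2 ≤ 3 * k + 2) : MinSImperfect (cycleGraph (m + 2)) := by
  classical
  constructor
  · have hub : alphaS (cycleGraph (m + 2)) ≤ k := by
      apply csSup_le ⟨0, zero_mem_alphaS_set _⟩
      rintro n ⟨T, hT, rfl⟩
      have := cycle_alpha_ub m hm hT
      omega
    have hlb : k + 1 ≤ thetaS (cycleGraph (m + 2)) := by
      apply le_csInf ⟨_, univ_mem_thetaS_set _⟩
      rintro n ⟨D, hD, rfl⟩
      have := cycle_theta_lb m hD
      omega
    omega
  · intro v s
    haveI : Fintype ↥s := Fintype.ofFinite _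
    refine le_antisymm (alphaS_le_thetaS _) ?_
    apply thetaS_le_alphaS_line _ (fun w => ((w.1.1 : Fin (m + 2)) - v).val)
    · intro a b hab
      have h1 : a.1.1 - v = b.1.1 - v := Fin.ext hab
      have h2 : a.1.1 = b.1.1 := by
        have := sub_left_inj.mp h1
        exact this
      exact Subtype.ext (Subtype.ext h2)
    · intro a b
      have hx : a.1.1 ≠ v := Set.mem_compl_singleton_iff.mp a.1.2
      have hy : b.1.1 ≠ v := Set.mem_compl_singleton_iff.mp b.1.2
      exact cycle_adj_iff_vals hx hy

/-- For every integer `k ≥ 1`, the cycle graphs `C_{3k+1}` and `C_{3k+2}` are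
minimal S-imperfect. -/
theorem cycle_not_three_mul_minSImperfect (k : ℕ) (hk : 1 ≤ k) :
    MinSImperfect (SimpleGraph.cycleGraph (3 * k + 1)) ∧
    MinSImperfect (SimpleGraph.cycleGraph (3 * k + 2)) := by
  constructor
  · have h : 3 * k + 1 = (3 * k - 1) + 2 := by omega
    rw [h]
    exact cycle_master (k := k) (by omega) (by omega) (by omega)
  · have h : 3 * k + 2 = (3 * k) + 2 := by omega
    rw [h]
    exact cycle_master (k := k) (by omega) (by omega) (by omega)
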